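/- There exists a constant C > 0 such that for every n ≥ 1 and every word A^(n) = (A₁,…,A_n) ∈ 𝒜ⁿ, the function g(x) := |h_{A^(n)}'(x)| · f_μ(h_{A^(n)}(x)) / f_μ(x) on [0,1] (which equals the n-th iterate of the normalized transfer operator applied to the indicator of I_{A^(n)}) has total variation Var_{[0,1]}(g) ≤ C · μ(I_{A^(n)}). -/

import Mathlib

/-!
On a neighbourhood `[-1/2, 3/2]` of `[0,1]`, every cylinder map `hWord l` is the Möbius map
`x ↦ (p x + q) / (r x + s)` of an integer matrix of determinant `±1` whose denominator
`D(x) = r x + s` stays positive. Integrality gives `D ≥ 1` on `[0,1]`, and positivity on the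
larger interval gives bounded distortion `D(y) ≤ 3 D(x)`. Since `|h'| = 1/D²` and the cylinder has
length `|I| = 1/(D(0) D(1))`, the normalized function is `|I|` times the product of
`D(0) D(1)/D²` and `f_μ ∘ h / f_μ`, both bounded and Lipschitz with absolute constants. Its
variation is therefore `O(|I|)`, while `μ(I) ≥ |I|/2` because `f_μ ≥ 1/2`.
-/

open MeasureTheory Real Set Filter Topology

namespace SCF

/-- The involution `ι(x) = (1−x)/(1+x)`. -/
noncomputable def iota (x : ℝ) : ℝ := (1 - x) / (1 + x)

/-- Even continued-fraction step.  For `y ∈ (0,1/2]` one has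
`⌊(1/y+1)/2⌋ = k` whenever `1/y ∈ (2k−1, 2k+1)`, so `Te y = |1/y − 2k|`;
explicitly `Te y = 1/y − 2` on `[1/3,1/2]`, `Te y = 1/y − 2k` on
`[1/(2k+1), 1/(2k))` and `Te y = 2k − 1/y` on `[1/(2k), 1/(2k−1))` (`k ≥ 2`). -/
noncomputable def Te (y : ℝ) : ℝ := |1 / y - 2 * (⌊(1 / y + 1) / 2⌋ : ℝ)|

/-- The spliced continued fraction (SCF) map `T : [0,1] → [0,1]`, with
`T 0 = 0`, `T 1 = 1`.  On `(0,1/2]` it is the even continued fraction map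
(see `Te`), and on `(1/2,1)` it is the odd–odd map, which is the conjugate
`ι ∘ Te ∘ ι` of the even map; this agrees with the branchwise definition:
`T x = (k x − (k−1))/(k − (k+1) x)` on `((k−1)/k, (2k−1)/(2k+1)]` and
`T x = (k − (k+1) x)/(k x − (k−1))` on `((2k−1)/(2k+1), k/(k+1)]` for `k ≥ 2`. -/
noncomputable def T (x : ℝ) : ℝ :=
  if x ≤ 0 then 0
  else if 1 ≤ x then 1
  else if x ≤ 1 / 2 then Te x
  else iota (Te (iota x))

/-- Parity label of a digit: `e` (even cusp) or `o` (odd–odd cusp). -/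
inductive Par | e | o
deriving DecidableEq

/-- A candidate SCF digit `(a, ε)_s`. -/
structure Digit where
  a : ℤ
  eps : ℤ
  s : Par
deriving DecidableEq

/-- The digit set `𝒜 = {(k,ε)_s : k ≥ 2, ε = ±1, s ∈ {e,o}} ∪ {(1,+1)_e}`. -/
def Digit.Valid (d : Digit) : Prop :=
  (2 ≤ d.a ∧ (d.eps = 1 ∨ d.eps = -1)) ∨ (d.a = 1 ∧ d.eps = 1 ∧ d.s = Par.e)

/-- The branch intervals `I_{(a,ε)_s}` of the SCF map. -/
noncomputable def branch (d : Digit) : Set ℝ :=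
  match d.s with
  | Par.e =>
      if d.a = 1 then Set.Icc (1/3 : ℝ) (1/2)
      else if d.eps = 1 then Set.Ico (1 / (2 * (d.a : ℝ) + 1)) (1 / (2 * (d.a : ℝ)))
      else Set.Ico (1 / (2 * (d.a : ℝ))) (1 / (2 * (d.a : ℝ) - 1))
  | Par.o =>
      if d.eps = 1 then
        Set.Ioc ((2 * (d.a : ℝ) - 1) / (2 * (d.a : ℝ) + 1)) ((d.a : ℝ) / ((d.a : ℝ) + 1))
      else
        Set.Ioc (((d.a : ℝ) - 1) / (d.a : ℝ)) ((2 * (d.a : ℝ) - 1) / (2 * (d.a : ℝ) + 1))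

open Classical in
/-- The SCF digit of a point `y` (the unique valid digit `d` with `y ∈ I_d`;
well defined for every `y ∈ (0,1)`). -/
noncomputable def digit (y : ℝ) : Digit :=
  if h : ∃ d : Digit, d.Valid ∧ y ∈ branch d then h.choose else ⟨1, 1, Par.e⟩

/-- The `n`-th SCF digit `(a_n(x), ε_n(x))_{s_n(x)}` of `x`, `n ≥ 1`,
determined by `T^[n−1] x ∈ I_{(a_n,ε_n)_{s_n}}`. -/
noncomputable def dig (n : ℕ) (x : ℝ) : Digit := digit (T^[n - 1] x)

/-- The `n`-th SCF partial quotient `a_n(x)`. -/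
noncomputable def a (n : ℕ) (x : ℝ) : ℤ := (dig n x).a

/-- The invariant density `f_μ`. -/
noncomputable def fdens (x : ℝ) : ℝ :=
  2 / (Real.log (2 + Real.sqrt 3) * (1 - (2 - Real.sqrt 3) * x) * (1 + Real.sqrt 3 * x))

/-- The absolutely continuous `T`-invariant probability measure `μ` on `(0,1)`. -/
noncomputable def mu : Measure ℝ :=
  (volume.restrict (Set.Ioo (0 : ℝ) 1)).withDensity fun x => ENNReal.ofReal (fdens x)

/-- The inverse branches `h_{(a,ε)_s}` of the SCF map `T`. -/
noncomputable def h (d : Digit) (x : ℝ) : ℝ :=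
  match d.s with
  | Par.e => 1 / (2 * (d.a : ℝ) + (d.eps : ℝ) * x)
  | Par.o =>
      if d.eps = 1 then (((d.a : ℝ) - 1) * x + (d.a : ℝ)) / ((d.a : ℝ) * x + ((d.a : ℝ) + 1))
      else ((d.a : ℝ) * x + ((d.a : ℝ) - 1)) / (((d.a : ℝ) + 1) * x + (d.a : ℝ))

/-- Composed inverse branch `h_{A^{(n)}} = h_{A₁} ∘ ⋯ ∘ h_{A_n}` of a word. -/
noncomputable def hWord (l : List Digit) : ℝ → ℝ :=
  l.foldr (fun d g => h d ∘ g) id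

/-- The dual inverse branches `bar h_{(b,η)_t}`. -/
noncomputable def hbar (d : Digit) (y : ℝ) : ℝ :=
  match d.s with
  | Par.e => (d.eps : ℝ) / (2 * (d.a : ℝ) + y)
  | Par.o =>
      1 / (1 + (d.eps : ℝ) / (((d.a : ℝ) - ((max 0 d.eps : ℤ) : ℝ)) + 1 / (1 + y)))

/-- The matrix `M_{(a,ε)_s}` associated with the inverse branch `h_{(a,ε)_s}`. -/
noncomputable def Mdig (d : Digit) : Matrix (Fin 2) (Fin 2) ℝ :=
  match d.s with
  | Par.e => !![0, 1; (d.eps : ℝ), 2 * (d.a : ℝ)]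
  | Par.o =>
      !![(d.a : ℝ) - ((max 0 d.eps : ℤ) : ℝ), (d.a : ℝ) - ((max 0 d.eps : ℤ) : ℝ) + (d.eps : ℝ);
         (d.a : ℝ) - ((max 0 d.eps : ℤ) : ℝ) + 1, (d.a : ℝ) - ((max 0 d.eps : ℤ) : ℝ) + (d.eps : ℝ) + 1]

/-- `M_n(x) = M_{(a₁,ε₁)_{s₁}} ⋯ M_{(a_n,ε_n)_{s_n}}`. -/
noncomputable def Mn (n : ℕ) (x : ℝ) : Matrix (Fin 2) (Fin 2) ℝ :=
  ((List.range n).map fun i => Mdig (digit (T^[i] x))).prod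

/-- `P_n(x)`: the `(1,2)`-entry of `M_n(x)` (numerator of the `n`-th convergent). -/
noncomputable def Pc (n : ℕ) (x : ℝ) : ℝ := Mn n x 0 1

/-- `Q_n(x)`: the `(2,2)`-entry of `M_n(x)` (denominator of the `n`-th convergent). -/
noncomputable def Qc (n : ℕ) (x : ℝ) : ℝ := Mn n x 1 1

end SCF

open scoped NNReal ENNReal

section Lipschitz

variable {α : Type*} [PseudoMetricSpace α] {s : Set α} {f g : α → ℝ} {K Kf Kg Mf Mg : ℝ≥0}

theorem LipschitzOnWith.mul_of_abs_le (hf : LipschitzOnWith Kf f s) (hg : LipschitzOnWith Kg g s)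
    (hfM : ∀ x ∈ s, |f x| ≤ Mf) (hgM : ∀ x ∈ s, |g x| ≤ Mg) :
    LipschitzOnWith (Kf * Mg + Mf * Kg) (fun x => f x * g x) s := by
  refine LipschitzOnWith.of_dist_le_mul fun x hx y hy => ?_
  have hfd := hf.dist_le_mul x hx y hy
  have hgd := hg.dist_le_mul x hx y hy
  simp only [Real.dist_eq] at hfd hgd ⊢
  calc |f x * g x - f y * g y| = |(f x - f y) * g x + f y * (g x - g y)| := by ring_nf
    _ ≤ |f x - f y| * |g x| + |f y| * |g x - g y| := by
        rw [← abs_mul, ← abs_mul]; exact abs_add_le _ _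
    _ ≤ Kf * dist x y * Mg + Mf * (Kg * dist x y) := by
        gcongr
        exacts [hgM x hx, hfM y hy]
    _ = _ := by push_cast; ring

theorem LipschitzOnWith.inv_of_le {m : ℝ≥0} (hm : 0 < m) (hf : LipschitzOnWith K f s)
    (hfm : ∀ x ∈ s, m ≤ f x) : LipschitzOnWith (K / m ^ 2) (fun x => (f x)⁻¹) s := by
  refine LipschitzOnWith.of_dist_le_mul fun x hx y hy => ?_
  have hfd := hf.dist_le_mul x hx y hy
  have hm' : (0 : ℝ) < m := hm
  have hx' := hfm x hx
  have hy' := hfm y hy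
  have hfx : 0 < f x := hm'.trans_le hx'
  have hfy : 0 < f y := hm'.trans_le hy'
  rw [Real.dist_eq] at hfd ⊢
  rw [inv_sub_inv hfx.ne' hfy.ne', abs_div, abs_sub_comm, abs_of_pos (mul_pos hfx hfy),
    div_le_iff₀ (mul_pos hfx hfy)]
  have hmm : (m : ℝ) ^ 2 ≤ f x * f y := by nlinarith
  calc |f x - f y| ≤ K * dist x y := hfd
    _ = K / m ^ 2 * dist x y * m ^ 2 := by field_simp
    _ ≤ _ := by push_cast; gcongr

end Lipschitz

theorem LipschitzOnWith.eVariationOn_Icc_le {E : Type*} [PseudoEMetricSpace E] {f : ℝ → E}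
    {K : ℝ≥0} {a b : ℝ} (hf : LipschitzOnWith K f (Icc a b)) :
    eVariationOn f (Icc a b) ≤ K * ENNReal.ofReal (b - a) := by
  simpa using hf.comp_eVariationOn_le (mapsTo_id (Icc a b))

theorem eVariationOn_const_mul_le {α : Type*} [LinearOrder α] (c : ℝ) (f : α → ℝ) (s : Set α) :
    eVariationOn (fun x => c * f x) s ≤ ‖c‖ₑ * eVariationOn f s :=
  (lipschitzWith_smul c).lipschitzOnWith.comp_eVariationOn_le (mapsTo_univ f s)

namespace SCF

lemma sqrt_three_mem_Icc : √3 ∈ Icc (17 / 10 : ℝ) (9 / 5) := by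
  have h := Real.sq_sqrt (show (0 : ℝ) ≤ 3 by norm_num)
  constructor <;> nlinarith [Real.sqrt_nonneg 3]

lemma log_two_add_sqrt_three_mem_Icc : Real.log (2 + √3) ∈ Icc (1 / 2 : ℝ) (7 / 5) := by
  have hs := sqrt_three_mem_Icc
  constructor
  · have := Real.log_le_log (by norm_num) (show (2 : ℝ) ≤ 2 + √3 by linarith [hs.1])
    linarith [Real.log_two_gt_d9]
  · have := Real.log_le_log (by linarith [hs.1]) (show 2 + √3 ≤ 2 ^ 2 by linarith [hs.2])
    rw [Real.log_pow] at this
    push_cast at this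
    linarith [Real.log_two_lt_d9]

lemma inv_fdens (x : ℝ) :
    (fdens x)⁻¹ = Real.log (2 + √3) * (1 - (2 - √3) * x) * (1 + √3 * x) / 2 := by
  rw [fdens, inv_div]

lemma inv_fdens_mem_Icc {x : ℝ} (hx : x ∈ Icc (0 : ℝ) 1) : (fdens x)⁻¹ ∈ Icc (1 / 6 : ℝ) 2 := by
  obtain ⟨hs1, hs2⟩ := sqrt_three_mem_Icc
  obtain ⟨hL1, hL2⟩ := log_two_add_sqrt_three_mem_Icc
  obtain ⟨hx0, hx1⟩ := hx
  have hA1 : 7 / 10 ≤ 1 - (2 - √3) * x := by nlinarith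
  have hA2 : 1 - (2 - √3) * x ≤ 1 := by nlinarith
  have hB1 : 1 ≤ 1 + √3 * x := by nlinarith
  have hB2 : 1 + √3 * x ≤ 14 / 5 := by nlinarith
  have hLA1 : 7 / 20 ≤ Real.log (2 + √3) * (1 - (2 - √3) * x) := by nlinarith
  have hLA2 : Real.log (2 + √3) * (1 - (2 - √3) * x) ≤ 7 / 5 := by nlinarith
  rw [inv_fdens]
  constructor <;> nlinarith

lemma lipschitzOnWith_inv_fdens : LipschitzOnWith 2 (fun x => (fdens x)⁻¹) (Icc (0 : ℝ) 1) := by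
  refine LipschitzOnWith.of_dist_le_mul fun x hx y hy => ?_
  obtain ⟨hs1, hs2⟩ := sqrt_three_mem_Icc
  obtain ⟨hL1, hL2⟩ := log_two_add_sqrt_three_mem_Icc
  have hs : √3 ^ 2 = 3 := Real.sq_sqrt (by norm_num)
  set c := (2 * √3 - 2) - (2 * √3 - 3) * (x + y)
  have hc0 : 0 ≤ c := by nlinarith [hx.2, hy.2]
  have hc1 : c ≤ 8 / 5 := by nlinarith [hx.1, hy.1]
  have hdiff : (fdens x)⁻¹ - (fdens y)⁻¹ = Real.log (2 + √3) * c / 2 * (x - y) := by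
    rw [inv_fdens, inv_fdens]; ring_nf; rw [hs]; ring
  rw [Real.dist_eq, Real.dist_eq, hdiff, abs_mul,
    abs_of_nonneg (by positivity : 0 ≤ Real.log (2 + √3) * c / 2)]
  gcongr
  push_cast
  nlinarith

lemma fdens_mem_Icc {x : ℝ} (hx : x ∈ Icc (0 : ℝ) 1) : fdens x ∈ Icc (1 / 2 : ℝ) 6 := by
  obtain ⟨h1, h2⟩ := inv_fdens_mem_Icc hx
  have hpos : 0 < (fdens x)⁻¹ := by linarith
  rw [← inv_inv (fdens x)]
  constructor
  · rw [← inv_inv (1 / 2 : ℝ)]; exact inv_anti₀ hpos (by norm_num; linarith)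
  · rw [← inv_inv (6 : ℝ)]; exact inv_anti₀ (by norm_num) (by norm_num at h1 ⊢; linarith)

lemma lipschitzOnWith_fdens : LipschitzOnWith 72 fdens (Icc (0 : ℝ) 1) := by
  have h := lipschitzOnWith_inv_fdens.inv_of_le (m := 6⁻¹) (by norm_num)
    fun x hx => by simpa using (inv_fdens_mem_Icc hx).1
  simpa only [inv_inv, show (2 : ℝ≥0) / 6⁻¹ ^ 2 = 72 by norm_num] using h

section Mobius

variable (M N : Matrix (Fin 2) (Fin 2) ℤ) {x y : ℝ}

noncomputable def mobiusDen (x : ℝ) : ℝ := M 1 0 * x + M 1 1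

noncomputable def mobius (x : ℝ) : ℝ := (M 0 0 * x + M 0 1) / mobiusDen M x

lemma mobius_one : mobius 1 = id := by
  funext x
  simp [mobius, mobiusDen]

variable {M N}

lemma mobiusDen_mul (hx : mobiusDen N x ≠ 0) :
    mobiusDen (M * N) x = mobiusDen M (mobius N x) * mobiusDen N x := by
  simp only [mobius, mobiusDen, Matrix.mul_apply, Fin.sum_univ_two] at hx ⊢
  push_cast
  field_simp
  ring

lemma mobius_mul (hx : mobiusDen N x ≠ 0) : mobius (M * N) x = mobius M (mobius N x) := by
  rw [mobius, mobiusDen_mul hx, mobius, div_mul_eq_div_div_swap]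
  congr 1
  simp only [mobiusDen, Matrix.mul_apply, Fin.sum_univ_two] at hx ⊢
  push_cast
  field_simp
  ring

lemma mobius_sub_mobius (hx : mobiusDen M x ≠ 0) (hy : mobiusDen M y ≠ 0) :
    mobius M x - mobius M y = M.det * (x - y) / (mobiusDen M x * mobiusDen M y) := by
  rw [mobius, mobius, div_sub_div _ _ hx hy, Matrix.det_fin_two]
  simp only [mobiusDen]
  push_cast
  ring

lemma hasDerivAt_mobius (hx : mobiusDen M x ≠ 0) :
    HasDerivAt (mobius M) (M.det / mobiusDen M x ^ 2) x := by
  have hden : HasDerivAt (mobiusDen M) (M 1 0) x := by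
    unfold mobiusDen
    simpa using ((hasDerivAt_id x).const_mul (M 1 0 : ℝ)).add_const (M 1 1 : ℝ)
  have hnum : HasDerivAt (fun x : ℝ => M 0 0 * x + M 0 1) (M 0 0) x := by
    simpa using ((hasDerivAt_id x).const_mul (M 0 0 : ℝ)).add_const (M 0 1 : ℝ)
  refine (hnum.div hden hx).congr_deriv ?_
  rw [Matrix.det_fin_two, mobiusDen]
  push_cast
  ring

lemma abs_det_eq_one (hdet : IsUnit M.det) : |(M.det : ℝ)| = 1 := by
  rw [← Int.cast_abs, Int.isUnit_iff_abs_eq.1 hdet, Int.cast_one]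

end Mobius

/-- The margin around `[0,1]` is what gives bounded distortion on `[0,1]`
(`mobiusDen_le_three_mul`). -/
def branchMonoid : Submonoid (Matrix (Fin 2) (Fin 2) ℤ) where
  carrier := {M | IsUnit M.det ∧
    ∀ x ∈ Icc (-1 / 2 : ℝ) (3 / 2), 0 < mobiusDen M x ∧ mobius M x ∈ Icc (-1 / 2 : ℝ) (3 / 2)}
  one_mem' := ⟨by simp, fun x hx => ⟨by simp [mobiusDen], by simpa [mobius_one] using hx⟩⟩
  mul_mem' := by
    rintro M N ⟨hMdet, hM⟩ ⟨hNdet, hN⟩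
    refine ⟨by simpa only [Matrix.det_mul] using hMdet.mul hNdet, fun x hx => ?_⟩
    obtain ⟨hNx, hNJ⟩ := hN x hx
    obtain ⟨hMx, hMJ⟩ := hM _ hNJ
    rw [mobiusDen_mul hNx.ne', mobius_mul hNx.ne']
    exact ⟨mul_pos hMx hNx, hMJ⟩

/-- `Mdig d` over `ℤ`, for valid digits `d`. -/
def digitMatrix (d : Digit) : Matrix (Fin 2) (Fin 2) ℤ :=
  match d.s with
  | Par.e => !![0, 1; d.eps, 2 * d.a]
  | Par.o => if d.eps = 1 then !![d.a - 1, d.a; d.a, d.a + 1] else !![d.a, d.a - 1; d.a + 1, d.a]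

lemma h_eq_mobius (d : Digit) : h d = mobius (digitMatrix d) := by
  funext x
  obtain ⟨k, ε, _ | _⟩ := d
  · simp [h, digitMatrix, mobius, mobiusDen, add_comm]
  · by_cases hε : ε = 1 <;> simp [h, digitMatrix, mobius, mobiusDen, hε]

lemma digitMatrix_pos_and_mem {d : Digit} (hd : d.Valid) {x : ℝ}
    (hx : x ∈ Icc (-1 / 2 : ℝ) (3 / 2)) :
    0 < mobiusDen (digitMatrix d) x ∧ mobius (digitMatrix d) x ∈ Icc (0 : ℝ) 1 := by
  have hquot {n m : ℝ} (hn : 0 ≤ n) (hnm : n ≤ m) (hm : 0 < m) : n / m ∈ Icc (0 : ℝ) 1 :=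
    ⟨div_nonneg hn hm.le, (div_le_one hm).2 hnm⟩
  obtain ⟨hx0, hx1⟩ := hx
  rw [mobius]
  obtain ⟨k, ε, _ | _⟩ := d <;> simp only [Digit.Valid] at hd
  · have hden : 1 ≤ (ε : ℝ) * x + 2 * k := by
      rcases hd with ⟨hk, rfl | rfl⟩ | ⟨rfl, rfl, -⟩
      · have : (2 : ℝ) ≤ k := by exact_mod_cast hk
        push_cast; linarith
      · have : (2 : ℝ) ≤ k := by exact_mod_cast hk
        push_cast; linarith
      · norm_num; linarith
    simp only [digitMatrix, mobiusDen, Matrix.of_apply, Matrix.cons_val', Matrix.cons_val_zero,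
      Matrix.cons_val_one, Matrix.empty_val', Matrix.cons_val_fin_one, Int.cast_zero,
      Int.cast_one, Int.cast_mul, Int.cast_ofNat, zero_mul, zero_add] at hden ⊢
    exact ⟨by linarith, hquot zero_le_one hden (by linarith)⟩
  · have hk : (2 : ℝ) ≤ k := by
      rcases hd with ⟨hk, -⟩ | ⟨-, -, ⟨⟩⟩
      exact_mod_cast hk
    by_cases hε : ε = 1
    · simp only [digitMatrix, mobiusDen, hε, if_true, Matrix.of_apply, Matrix.cons_val',
        Matrix.cons_val_zero, Matrix.cons_val_one, Matrix.empty_val', Matrix.cons_val_fin_one,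
        Int.cast_sub, Int.cast_add, Int.cast_one]
      exact ⟨by nlinarith, hquot (by nlinarith) (by nlinarith) (by nlinarith)⟩
    · simp only [digitMatrix, mobiusDen, hε, if_false, Matrix.of_apply, Matrix.cons_val',
        Matrix.cons_val_zero, Matrix.cons_val_one, Matrix.empty_val', Matrix.cons_val_fin_one,
        Int.cast_sub, Int.cast_add, Int.cast_one]
      exact ⟨by nlinarith, hquot (by nlinarith) (by nlinarith) (by nlinarith)⟩

lemma digitMatrix_mem {d : Digit} (hd : d.Valid) : digitMatrix d ∈ branchMonoid := by
  refine ⟨?_, fun x hx => ?_⟩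
  · obtain ⟨k, ε, _ | _⟩ := d <;> simp only [Digit.Valid] at hd
    · have hε : ε = 1 ∨ ε = -1 := by omega
      rcases hε with rfl | rfl <;> simp [digitMatrix, Matrix.det_fin_two]
    · by_cases hε : ε = 1 <;> simp [digitMatrix, Matrix.det_fin_two, hε] <;> ring_nf <;> simp
  · obtain ⟨hpos, h0, h1⟩ := digitMatrix_pos_and_mem hd hx
    exact ⟨hpos, by linarith, by linarith⟩

def wordMatrix (l : List Digit) : Matrix (Fin 2) (Fin 2) ℤ := (l.map digitMatrix).prod

lemma wordMatrix_cons (d : Digit) (l : List Digit) :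
    wordMatrix (d :: l) = digitMatrix d * wordMatrix l := by
  simp [wordMatrix]

section Words

variable {l : List Digit}

lemma wordMatrix_mem (hl : ∀ d ∈ l, d.Valid) : wordMatrix l ∈ branchMonoid :=
  Submonoid.list_prod_mem _ (by simpa using fun d hd => digitMatrix_mem (hl d hd))

lemma hWord_eqOn_mobius (hl : ∀ d ∈ l, d.Valid) :
    EqOn (hWord l) (mobius (wordMatrix l)) (Icc (-1 / 2 : ℝ) (3 / 2)) := by
  induction l with
  | nil => simp [hWord, wordMatrix, mobius_one, eqOn_refl]
  | cons d t ih =>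
    intro x hx
    have ht : ∀ e ∈ t, e.Valid := fun e he => hl e (List.mem_cons_of_mem d he)
    change h d (hWord t x) = _
    rw [ih ht hx, h_eq_mobius, wordMatrix_cons, mobius_mul ((wordMatrix_mem ht).2 x hx).1.ne']

lemma hWord_mapsTo (hne : l ≠ []) (hl : ∀ d ∈ l, d.Valid) :
    MapsTo (hWord l) (Icc (-1 / 2 : ℝ) (3 / 2)) (Icc 0 1) := by
  obtain ⟨d, t, rfl⟩ := List.exists_cons_of_ne_nil hne
  intro x hx
  have ht : ∀ e ∈ t, e.Valid := fun e he => hl e (List.mem_cons_of_mem d he)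
  have htJ : hWord t x ∈ Icc (-1 / 2 : ℝ) (3 / 2) := by
    rw [hWord_eqOn_mobius ht hx]
    exact ((wordMatrix_mem ht).2 x hx).2
  change h d (hWord t x) ∈ _
  rw [h_eq_mobius]
  exact (digitMatrix_pos_and_mem (hl d List.mem_cons_self) htJ).2

lemma deriv_hWord_eqOn (hl : ∀ d ∈ l, d.Valid) :
    EqOn (deriv (hWord l)) (deriv (mobius (wordMatrix l))) (Ioo (-1 / 2 : ℝ) (3 / 2)) :=
  fun _ hx => ((hWord_eqOn_mobius hl).eventuallyEq_of_mem (Icc_mem_nhds hx.1 hx.2)).deriv_eq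

end Words

/-- `distortion M x = |h'(x)| / |h(1) - h(0)|` for `h = mobius M`. -/
noncomputable def distortion (M : Matrix (Fin 2) (Fin 2) ℤ) (x : ℝ) : ℝ :=
  mobiusDen M 0 * mobiusDen M 1 / mobiusDen M x ^ 2

section Distortion

variable {M : Matrix (Fin 2) (Fin 2) ℤ} {x y : ℝ}
  (hM : ∀ x ∈ Icc (-1 / 2 : ℝ) (3 / 2), 0 < mobiusDen M x)
include hM

lemma one_le_mobiusDen (hx : x ∈ Icc (0 : ℝ) 1) : 1 ≤ mobiusDen M x := by
  have h0 : (0 : ℝ) < M 1 1 := by simpa [mobiusDen] using hM 0 (by norm_num)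
  have h1 : (0 : ℝ) < M 1 0 + M 1 1 := by simpa [mobiusDen] using hM 1 (by norm_num)
  have h0' : (1 : ℝ) ≤ M 1 1 := by exact_mod_cast (show (0 : ℤ) < M 1 1 by exact_mod_cast h0)
  have h1' : (1 : ℝ) ≤ M 1 0 + M 1 1 := by
    exact_mod_cast (show (0 : ℤ) < M 1 0 + M 1 1 by exact_mod_cast h1)
  obtain ⟨hx0, hx1⟩ := hx
  rw [mobiusDen]
  nlinarith

lemma abs_mobiusDen_coeff_le (hx : x ∈ Icc (0 : ℝ) 1) : |(M 1 0 : ℝ)| ≤ 2 * mobiusDen M x := by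
  have hl := hM (-1 / 2) (by norm_num)
  have hr := hM (3 / 2) (by norm_num)
  obtain ⟨hx0, hx1⟩ := hx
  simp only [mobiusDen] at hl hr ⊢
  rcases abs_cases (M 1 0 : ℝ) with ⟨he, hpos⟩ | ⟨he, hneg⟩ <;> rw [he] <;> nlinarith

lemma mobiusDen_le_three_mul (hx : x ∈ Icc (0 : ℝ) 1) (hy : y ∈ Icc (0 : ℝ) 1) :
    mobiusDen M y ≤ 3 * mobiusDen M x := by
  have hr := abs_mobiusDen_coeff_le hM hx
  have hyx : |y - x| ≤ 1 := abs_sub_le_iff.2 ⟨by linarith [hx.1, hy.2], by linarith [hx.2, hy.1]⟩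
  have hdiff : mobiusDen M y - mobiusDen M x ≤ |(M 1 0 : ℝ)| := by
    calc mobiusDen M y - mobiusDen M x = M 1 0 * (y - x) := by simp only [mobiusDen]; ring
      _ ≤ |(M 1 0 : ℝ)| * |y - x| := by rw [← abs_mul]; exact le_abs_self _
      _ ≤ |(M 1 0 : ℝ)| := mul_le_of_le_one_right (abs_nonneg _) hyx
  linarith

lemma lipschitzOnWith_mobius (hdet : IsUnit M.det) :
    LipschitzOnWith 1 (mobius M) (Icc (0 : ℝ) 1) := by
  refine LipschitzOnWith.of_dist_le_mul fun x hx y hy => ?_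
  have hDx := one_le_mobiusDen hM hx
  have hDy := one_le_mobiusDen hM hy
  have hDxy : 1 ≤ mobiusDen M x * mobiusDen M y := by nlinarith
  rw [Real.dist_eq, Real.dist_eq, mobius_sub_mobius (by positivity) (by positivity), abs_div,
    abs_mul, abs_det_eq_one hdet, one_mul, abs_of_pos (show 0 < mobiusDen M x * mobiusDen M y by
      linarith), NNReal.coe_one, one_mul]
  exact div_le_self (abs_nonneg _) hDxy

lemma abs_distortion_le (hx : x ∈ Icc (0 : ℝ) 1) : |distortion M x| ≤ 9 := by
  have hDx := one_le_mobiusDen hM hx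
  have h0 := mobiusDen_le_three_mul hM hx (y := 0) (by norm_num)
  have h1 := mobiusDen_le_three_mul hM hx (y := 1) (by norm_num)
  have hD0 := one_le_mobiusDen hM (x := 0) (by norm_num)
  have hD1 := one_le_mobiusDen hM (x := 1) (by norm_num)
  rw [distortion, abs_of_nonneg (by positivity), div_le_iff₀ (by positivity)]
  nlinarith [mul_le_mul h0 h1 (by positivity) (by positivity)]

lemma lipschitzOnWith_distortion :
    LipschitzOnWith 36 (distortion M) (Icc (0 : ℝ) 1) := by
  refine LipschitzOnWith.of_dist_le_mul fun x hx y hy => ?_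
  have hsub : mobiusDen M y - mobiusDen M x = M 1 0 * (y - x) := by simp only [mobiusDen]; ring
  have hrx := abs_mobiusDen_coeff_le hM hx
  have hry := abs_mobiusDen_coeff_le hM hy
  have h0 := mobiusDen_le_three_mul hM hx (y := 0) (by norm_num)
  have h1 := mobiusDen_le_three_mul hM hy (y := 1) (by norm_num)
  have hD0 := one_le_mobiusDen hM (x := 0) (by norm_num)
  have hD1 := one_le_mobiusDen hM (x := 1) (by norm_num)
  have hDx := one_le_mobiusDen hM hx
  have hDy := one_le_mobiusDen hM hy
  rw [Real.dist_eq, Real.dist_eq, distortion, distortion]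
  set Dx := mobiusDen M x
  set Dy := mobiusDen M y
  set P := mobiusDen M 0 * mobiusDen M 1
  have hP : 0 ≤ P := by positivity
  have hP9 : P ≤ 9 * (Dx * Dy) := by nlinarith [mul_le_mul h0 h1 (by positivity) (by positivity)]
  have hr : |(M 1 0 : ℝ)| * (Dx + Dy) ≤ 4 * (Dx * Dy) := by nlinarith
  have hdiff : P / Dx ^ 2 - P / Dy ^ 2 = P * (Dy - Dx) * (Dx + Dy) / (Dx ^ 2 * Dy ^ 2) := by
    field_simp
    ring
  have hnum : |P * (M 1 0 * (y - x)) * (Dx + Dy)| = P * |x - y| * (|(M 1 0 : ℝ)| * (Dx + Dy)) := by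
    rw [show P * (M 1 0 * (y - x)) * (Dx + Dy) = P * (Dx + Dy) * (M 1 0 * (y - x)) by ring,
      abs_mul (P * (Dx + Dy)), abs_of_nonneg (by positivity), abs_mul (M 1 0 : ℝ),
      abs_sub_comm y x]
    ring
  rw [hdiff, hsub, abs_div, hnum, abs_of_pos (by positivity : 0 < Dx ^ 2 * Dy ^ 2),
    div_le_iff₀ (by positivity)]
  have hxy := abs_nonneg (x - y)
  calc P * |x - y| * (|(M 1 0 : ℝ)| * (Dx + Dy))
      ≤ 9 * (Dx * Dy) * |x - y| * (4 * (Dx * Dy)) := by gcongr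
    _ = _ := by push_cast; ring

end Distortion

lemma ofReal_le_mu_Icc {u v : ℝ} (hu : 0 ≤ u) (hv : v ≤ 1) :
    ENNReal.ofReal ((v - u) / 2) ≤ mu (Icc u v) := by
  have hsub : Ioo u v ⊆ Ioo 0 1 := Ioo_subset_Ioo hu hv
  calc ENNReal.ofReal ((v - u) / 2)
      = ∫⁻ _ in Ioo u v, ENNReal.ofReal (1 / 2) := by
        rw [setLIntegral_const, Real.volume_Ioo, ← ENNReal.ofReal_mul (by norm_num)]
        ring_nf
    _ ≤ ∫⁻ x in Ioo u v, ENNReal.ofReal (fdens x) :=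
        setLIntegral_mono' measurableSet_Ioo fun x hx =>
          ENNReal.ofReal_le_ofReal (fdens_mem_Icc (Ioo_subset_Icc_self (hsub hx))).1
    _ = mu (Ioo u v) := by
        rw [mu, withDensity_apply _ measurableSet_Ioo, Measure.restrict_restrict measurableSet_Ioo,
          inter_eq_self_of_subset_left hsub]
    _ ≤ mu (Icc u v) := measure_mono Ioo_subset_Icc_self

lemma ofReal_le_mu_image {f : ℝ → ℝ} (hf : ContinuousOn f (Icc 0 1))
    (hmaps : MapsTo f (Icc 0 1) (Icc 0 1)) :
    ENNReal.ofReal (|f 1 - f 0| / 2) ≤ mu (f '' Icc 0 1) := by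
  have h0 := hmaps (left_mem_Icc.2 zero_le_one)
  have h1 := hmaps (right_mem_Icc.2 zero_le_one)
  have hivt : uIcc (f 0) (f 1) ⊆ f '' Icc 0 1 := by
    simpa [uIcc_of_le zero_le_one] using intermediate_value_uIcc (a := 0) (b := 1) (f := f)
      (by rwa [uIcc_of_le zero_le_one])
  rw [← max_sub_min_eq_abs]
  exact (ofReal_le_mu_Icc (le_min h0.1 h1.1) (max_le h0.2 h1.2)).trans (measure_mono hivt)

lemma abs_fdens_comp_mul_inv_fdens_le {f : ℝ → ℝ} (hmaps : MapsTo f (Icc 0 1) (Icc 0 1)) {x : ℝ}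
    (hx : x ∈ Icc (0 : ℝ) 1) : |fdens (f x) * (fdens x)⁻¹| ≤ 12 := by
  obtain ⟨hf1, hf2⟩ := fdens_mem_Icc (hmaps hx)
  obtain ⟨hi1, hi2⟩ := inv_fdens_mem_Icc hx
  rw [abs_of_nonneg (by positivity)]
  nlinarith [mul_le_mul hf2 hi2 (by linarith) (by norm_num)]

section NormalizedMobius

variable {M : Matrix (Fin 2) (Fin 2) ℤ}

lemma lipschitzOnWith_fdens_mobius_mul_inv_fdens (hdet : IsUnit M.det)
    (hpos : ∀ x ∈ Icc (-1 / 2 : ℝ) (3 / 2), 0 < mobiusDen M x)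
    (hmaps : MapsTo (mobius M) (Icc 0 1) (Icc 0 1)) :
    LipschitzOnWith 156 (fun x => fdens (mobius M x) * (fdens x)⁻¹) (Icc 0 1) := by
  have h := (lipschitzOnWith_fdens.comp (lipschitzOnWith_mobius hpos hdet) hmaps).mul_of_abs_le
    lipschitzOnWith_inv_fdens (Mf := 6) (Mg := 2)
    (fun x hx => by
      rw [Function.comp_apply, abs_of_nonneg (by linarith [(fdens_mem_Icc (hmaps hx)).1])]
      exact_mod_cast (fdens_mem_Icc (hmaps hx)).2)
    (fun x hx => by
      rw [abs_of_nonneg (by linarith [(inv_fdens_mem_Icc hx).1])]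
      exact_mod_cast (inv_fdens_mem_Icc hx).2)
  simpa only [Function.comp_def, show (72 : ℝ≥0) * 1 * 2 + 6 * 2 = 156 by norm_num] using h

lemma normalized_mobius_eqOn (hdet : IsUnit M.det)
    (hpos : ∀ x ∈ Icc (-1 / 2 : ℝ) (3 / 2), 0 < mobiusDen M x) :
    EqOn (fun x => |deriv (mobius M) x| * fdens (mobius M x) / fdens x)
      (fun x => |mobius M 1 - mobius M 0| * (distortion M x * (fdens (mobius M x) * (fdens x)⁻¹)))
      (Icc 0 1) := by
  intro x hx
  have hD0 := one_le_mobiusDen hpos (x := 0) (by norm_num)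
  have hD1 := one_le_mobiusDen hpos (x := 1) (by norm_num)
  have hDx := one_le_mobiusDen hpos hx
  have hfx := (fdens_mem_Icc hx).1
  beta_reduce
  rw [(hasDerivAt_mobius (by positivity)).deriv, mobius_sub_mobius (by positivity) (by positivity),
    abs_div, abs_div, abs_of_pos (show 0 < mobiusDen M 1 * mobiusDen M 0 by positivity), abs_mul,
    abs_det_eq_one hdet, distortion, abs_of_pos (by positivity)]
  field_simp
  norm_num

theorem eVariationOn_normalized_mobius_le (hM : M ∈ branchMonoid)
    (hmaps : MapsTo (mobius M) (Icc 0 1) (Icc 0 1)) :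
    eVariationOn (fun x => |deriv (mobius M) x| * fdens (mobius M x) / fdens x) (Icc 0 1)
      ≤ 1836 * ENNReal.ofReal |mobius M 1 - mobius M 0| := by
  obtain ⟨hdet, hJ⟩ := hM
  have hpos : ∀ x ∈ Icc (-1 / 2 : ℝ) (3 / 2), 0 < mobiusDen M x := fun x hx => (hJ x hx).1
  have hlip : LipschitzOnWith 1836
      (fun x => distortion M x * (fdens (mobius M x) * (fdens x)⁻¹)) (Icc 0 1) := by
    have h := (lipschitzOnWith_distortion hpos).mul_of_abs_le
      (lipschitzOnWith_fdens_mobius_mul_inv_fdens hdet hpos hmaps) (Mf := 9) (Mg := 12)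
      (fun x hx => by exact_mod_cast abs_distortion_le hpos hx)
      (fun x hx => by exact_mod_cast abs_fdens_comp_mul_inv_fdens_le hmaps hx)
    rwa [show (36 : ℝ≥0) * 12 + 9 * 156 = 1836 by norm_num] at h
  set c := |mobius M 1 - mobius M 0|
  calc eVariationOn (fun x => |deriv (mobius M) x| * fdens (mobius M x) / fdens x) (Icc 0 1)
      = eVariationOn (fun x => c * (distortion M x * (fdens (mobius M x) * (fdens x)⁻¹)))
          (Icc 0 1) := eVariationOn.eq_of_eqOn (normalized_mobius_eqOn hdet hpos)
    _ ≤ ‖c‖ₑ * eVariationOn (fun x => distortion M x * (fdens (mobius M x) * (fdens x)⁻¹))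
          (Icc 0 1) := eVariationOn_const_mul_le _ _ _
    _ ≤ ‖c‖ₑ * (1836 * ENNReal.ofReal (1 - 0)) := by gcongr; exact hlip.eVariationOn_Icc_le
    _ = 1836 * ENNReal.ofReal c := by
        rw [Real.enorm_eq_ofReal (abs_nonneg _), sub_zero, ENNReal.ofReal_one, mul_one, mul_comm]

end NormalizedMobius

/-- the `n`-th iterate of the normalized transfer operator
applied to the indicator of the cylinder `I_{A^{(n)}} = h_{A^{(n)}}([0,1])`,
namely `x ↦ |h_{A^{(n)}}'(x)| f_μ(h_{A^{(n)}} x) / f_μ(x)`, has total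
variation at most `C · μ(I_{A^{(n)}})`. -/
theorem variation_of_normalized_iterate :
    ∃ C : ℝ, 0 < C ∧ ∀ l : List Digit, l ≠ [] → (∀ d ∈ l, d.Valid) →
      eVariationOn (fun x => |deriv (hWord l) x| * fdens (hWord l x) / fdens x)
          (Set.Icc (0 : ℝ) 1)
        ≤ ENNReal.ofReal C * mu (hWord l '' Set.Icc (0 : ℝ) 1) := by
  refine ⟨3672, by norm_num, fun l hne hl => ?_⟩
  set M := wordMatrix l
  have hunit : Icc (0 : ℝ) 1 ⊆ Icc (-1 / 2) (3 / 2) := Icc_subset_Icc (by norm_num) (by norm_num)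
  have hEq : EqOn (hWord l) (mobius M) (Icc 0 1) := (hWord_eqOn_mobius hl).mono hunit
  have hderiv : EqOn (deriv (hWord l)) (deriv (mobius M)) (Icc 0 1) :=
    (deriv_hWord_eqOn hl).mono (Icc_subset_Ioo (by norm_num) (by norm_num))
  have hmaps : MapsTo (mobius M) (Icc 0 1) (Icc 0 1) :=
    fun x hx => hEq hx ▸ hWord_mapsTo hne hl (hunit hx)
  have hcont : ContinuousOn (mobius M) (Icc 0 1) := fun x hx =>
    (hasDerivAt_mobius ((wordMatrix_mem hl).2 x (hunit hx)).1.ne').continuousAt.continuousWithinAt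
  rw [eVariationOn.eq_of_eqOn (f' := fun x => |deriv (mobius M) x| * fdens (mobius M x) / fdens x)
    fun x hx => by simp only [hEq hx, hderiv hx], image_congr hEq]
  calc _ ≤ 1836 * ENNReal.ofReal |mobius M 1 - mobius M 0| :=
        eVariationOn_normalized_mobius_le (wordMatrix_mem hl) hmaps
    _ = ENNReal.ofReal 3672 * ENNReal.ofReal (|mobius M 1 - mobius M 0| / 2) := by
        rw [← ENNReal.ofReal_mul (by norm_num)]
        ring_nf
        norm_num
    _ ≤ _ := by gcongr; exact ofReal_le_mu_image hcont hmaps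

end SCF
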